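/- arXiv:2205.07318 — 2 statements merged into one kernel-verified Lean document; each statement's English description precedes it below -/
import Mathlib

section
/- Let G be a connected, locally finite, simple graph whose automorphism group acts transitively on the vertex set. Then for every vertex v the limit κ(G) := lim_{n→∞} σ_n(v)^{1/n} exists, and its value does not depend on the choice of v. -/
open Filter

/-- `sawCountG G v n` is the number `σ_n(v)` of `n`-step self-avoiding walks in the
simple graph `G` starting at the vertex `v`, i.e. the number of paths of length `n`
in `G` with first vertex `v` (walks whose vertices are pairwise distinct and whose
consecutive vertices are adjacent). -/
noncomputable def sawCountG {V : Type*} (G : SimpleGraph V) (v : V) (n : ℕ) : ℕ :=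
  Nat.card {p : Σ u : V, G.Walk v u // p.2.IsPath ∧ p.2.length = n}

namespace ConnAux

variable {V : Type*} {G : SimpleGraph V}

/-- Split a walk at position `n` into a prefix and suffix. -/
def splitAt {u v : V} : (p : G.Walk u v) → ℕ → Σ w : V, G.Walk u w × G.Walk w v
  | p, 0 => ⟨u, (.nil, p)⟩
  | .nil, _ + 1 => ⟨u, (.nil, .nil)⟩
  | .cons h q, n + 1 =>
      let s := splitAt q n
      ⟨s.1, (.cons h s.2.1, s.2.2)⟩

lemma splitAt_append {u v : V} (p : G.Walk u v) (n : ℕ) :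
    (splitAt p n).2.1.append (splitAt p n).2.2 = p := by
  induction p generalizing n with
  | nil => cases n <;> rfl
  | cons h q ih =>
    cases n with
    | zero => rfl
    | succ n => simp only [splitAt, SimpleGraph.Walk.cons_append, ih]

lemma splitAt_length_fst {u v : V} (p : G.Walk u v) {n : ℕ} (hn : n ≤ p.length) :
    (splitAt p n).2.1.length = n := by
  induction p generalizing n with
  | nil =>
    simp only [SimpleGraph.Walk.length_nil, Nat.le_zero] at hn
    subst hn; rfl
  | cons h q ih =>
    cases n with
    | zero => rfl
    | succ n =>
      simp only [splitAt, SimpleGraph.Walk.length_cons]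
      rw [ih (by simpa using hn)]

lemma splitAt_length_snd {u v : V} (p : G.Walk u v) (n : ℕ) :
    (splitAt p n).2.2.length = p.length - n := by
  induction p generalizing n with
  | nil => cases n <;> simp [splitAt]
  | cons h q ih =>
    cases n with
    | zero => rfl
    | succ n =>
      simp only [splitAt, SimpleGraph.Walk.length_cons, Nat.succ_sub_succ]
      exact ih n


/-- Map a walk of length `n+1` to its first step plus remainder. -/
def stepMap {v : V} {n : ℕ} :
    {p : Σ u : V, G.Walk v u // p.2.length = n + 1} →
    Σ w : G.neighborSet v, {p : Σ u : V, G.Walk (w : V) u // p.2.length = n}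
  | ⟨⟨_, .nil⟩, hl⟩ => absurd hl (by simp)
  | ⟨⟨u, .cons h q⟩, hl⟩ => ⟨⟨_, h⟩, ⟨⟨u, q⟩, by simpa using hl⟩⟩

lemma stepMap_inj {v : V} {n : ℕ} :
    Function.Injective (stepMap (G := G) (v := v) (n := n)) := by
  rintro ⟨⟨u, p⟩, hl⟩ ⟨⟨u', p'⟩, hl'⟩ h
  cases p with
  | nil => simp at hl
  | cons ha q =>
    cases p' with
    | nil => simp at hl'
    | cons ha' q' =>
      simp only [stepMap, Sigma.ext_iff, Subtype.mk.injEq] at h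
      obtain ⟨hw, h2⟩ := h
      cases hw
      have h4 := congrArg Subtype.val (eq_of_heq h2)
      injection h4 with hu hq
      subst hu
      obtain rfl := eq_of_heq hq
      rfl

lemma finite_walksFrom (hlf : G.LocallyFinite) (v : V) (n : ℕ) :
    Finite {p : Σ u : V, G.Walk v u // p.2.length = n} := by
  induction n generalizing v with
  | zero =>
    have : Subsingleton {p : Σ u : V, G.Walk v u // p.2.length = 0} := by
      constructor
      rintro ⟨⟨u, p⟩, hl⟩ ⟨⟨u', p'⟩, hl'⟩
      cases p with
      | nil =>
        cases p' with
        | nil => rfl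
        | cons _ _ => simp at hl'
      | cons _ _ => simp at hl
    infer_instance
  | succ n ih =>
    haveI : ∀ w : G.neighborSet v, Finite {p : Σ u : V, G.Walk (w : V) u // p.2.length = n} :=
      fun w => ih (w : V)
    haveI : Fintype (G.neighborSet v) := hlf v
    haveI : Finite (Σ w : G.neighborSet v, {p : Σ u : V, G.Walk (w : V) u // p.2.length = n}) :=
      Finite.instSigma
    exact Finite.of_injective _ stepMap_inj

lemma finite_saw (hlf : G.LocallyFinite) (v : V) (n : ℕ) :
    Finite {p : Σ u : V, G.Walk v u // p.2.IsPath ∧ p.2.length = n} := by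
  haveI := finite_walksFrom hlf v n
  exact Finite.of_injective
    (fun a => (⟨a.1, a.2.2⟩ : {p : Σ u : V, G.Walk v u // p.2.length = n}))
    (fun a b h => by
      apply Subtype.ext
      have := congrArg Subtype.val h
      simpa using this)

lemma sawCount_le_iso (hlf : G.LocallyFinite) (φ : G ≃g G) (v : V) (n : ℕ) :
    sawCountG G v n ≤ sawCountG G (φ v) n := by
  haveI := finite_saw hlf (φ v) n
  apply Nat.card_le_card_of_injective
    (f := fun a : {p : Σ u : V, G.Walk v u // p.2.IsPath ∧ p.2.length = n} =>
      (⟨⟨φ a.1.1, a.1.2.map φ.toHom⟩,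
        ⟨SimpleGraph.Walk.map_isPath_of_injective φ.toEquiv.injective a.2.1,
         by rw [SimpleGraph.Walk.length_map]; exact a.2.2⟩⟩ :
        {p : Σ u : V, G.Walk (φ v) u // p.2.IsPath ∧ p.2.length = n}))
  rintro ⟨⟨u, p⟩, hp, hl⟩ ⟨⟨u', p'⟩, hp', hl'⟩ h
  have h4 := congrArg Subtype.val h
  dsimp only at h4
  injection h4 with hu hq
  obtain rfl := φ.toEquiv.injective hu
  obtain rfl := SimpleGraph.Walk.map_injective_of_injective
    (f := φ.toHom) φ.toEquiv.injective v u (eq_of_heq hq)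
  rfl

lemma sawCount_const (hlf : G.LocallyFinite)
    (htrans : ∀ u v : V, ∃ φ : G ≃g G, φ u = v) (u v : V) (n : ℕ) :
    sawCountG G u n = sawCountG G v n := by
  apply le_antisymm
  · obtain ⟨φ, hφ⟩ := htrans u v
    simpa [hφ] using sawCount_le_iso hlf φ u n
  · obtain ⟨φ, hφ⟩ := htrans v u
    simpa [hφ] using sawCount_le_iso hlf φ v n

lemma sawCount_zero (v : V) : sawCountG G v 0 = 1 := by
  haveI : Subsingleton {p : Σ u : V, G.Walk v u // p.2.IsPath ∧ p.2.length = 0} := by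
    constructor
    rintro ⟨⟨u, p⟩, -, hl⟩ ⟨⟨u', p'⟩, -, hl'⟩
    cases p with
    | nil =>
      cases p' with
      | nil => rfl
      | cons _ _ => simp at hl'
    | cons _ _ => simp at hl
  haveI : Nonempty {p : Σ u : V, G.Walk v u // p.2.IsPath ∧ p.2.length = 0} :=
    ⟨⟨⟨v, .nil⟩, SimpleGraph.Walk.IsPath.nil, rfl⟩⟩
  haveI : Unique {p : Σ u : V, G.Walk v u // p.2.IsPath ∧ p.2.length = 0} :=
    uniqueOfSubsingleton (Classical.arbitrary _)
  rw [sawCountG]; exact Nat.card_unique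

lemma unmap_walk (f : G →g G) (g' : G →g G) (hid : ∀ x, g' (f x) = x) {w u : V}
    (r : G.Walk w u) : ((r.map f).map g').copy (hid w) (hid u) = r := by
  induction r with
  | nil => simp only [SimpleGraph.Walk.map_nil, SimpleGraph.Walk.copy_nil]
  | cons h q ih =>
    simp only [SimpleGraph.Walk.map_cons]
    rw [SimpleGraph.Walk.copy_cons]
    have h2 : ((q.map f).map g').copy rfl (hid _) = q.copy (hid _).symm rfl := by
      conv_rhs => rw [← ih]
      rw [SimpleGraph.Walk.copy_copy]
    rw [h2, SimpleGraph.Walk.cons_copy, SimpleGraph.Walk.copy_rfl_rfl]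

lemma sigma_append {v w a b : V} (q : G.Walk v w) (X : G.Walk w a) (hab : a = b)
    (P : G.Walk v b) (hP : q.append (X.copy rfl hab) = P) :
    (⟨a, q.append X⟩ : Σ x : V, G.Walk v x) = ⟨b, P⟩ := by
  subst hab
  subst hP
  rfl

lemma sawCount_subadd (hlf : G.LocallyFinite)
    (htrans : ∀ u v : V, ∃ φ : G ≃g G, φ u = v) (v : V) (m n : ℕ) :
    sawCountG G v (m + n) ≤ sawCountG G v m * sawCountG G v n := by
  classical
  haveI := finite_saw hlf v m
  haveI := finite_saw hlf v n
  have hφ : ∀ w, (htrans w v).choose w = v := fun w => (htrans w v).choose_spec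
  rw [show sawCountG G v m * sawCountG G v n =
      Nat.card ({p : Σ u : V, G.Walk v u // p.2.IsPath ∧ p.2.length = m} ×
        {p : Σ u : V, G.Walk v u // p.2.IsPath ∧ p.2.length = n}) by
    rw [Nat.card_prod]; rfl]
  have key : ∀ a : {p : Σ u : V, G.Walk v u // p.2.IsPath ∧ p.2.length = m + n},
      ((splitAt a.1.2 m).2.1.IsPath ∧ (splitAt a.1.2 m).2.1.length = m) ∧
      ((((splitAt a.1.2 m).2.2.map (htrans (splitAt a.1.2 m).1 v).choose.toHom).copy
          (hφ _) rfl).IsPath ∧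
        (((splitAt a.1.2 m).2.2.map (htrans (splitAt a.1.2 m).1 v).choose.toHom).copy
          (hφ _) rfl).length = n) := by
    rintro ⟨⟨u, p⟩, hp, hl⟩
    dsimp only at hp hl ⊢
    have hap := splitAt_append p m
    have hp' : ((splitAt p m).2.1.append (splitAt p m).2.2).IsPath := by
      rw [hap]; exact hp
    refine ⟨⟨hp'.of_append_left, splitAt_length_fst p (by omega)⟩, ?_, ?_⟩
    · rw [SimpleGraph.Walk.isPath_copy]
      exact SimpleGraph.Walk.map_isPath_of_injective
        (htrans (splitAt p m).1 v).choose.toEquiv.injective hp'.of_append_right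
    · rw [SimpleGraph.Walk.length_copy, SimpleGraph.Walk.length_map,
        splitAt_length_snd]
      omega
  set F : {p : Σ u : V, G.Walk v u // p.2.IsPath ∧ p.2.length = m + n} →
      {p : Σ u : V, G.Walk v u // p.2.IsPath ∧ p.2.length = m} ×
      {p : Σ u : V, G.Walk v u // p.2.IsPath ∧ p.2.length = n} := fun a =>
    (⟨⟨(splitAt a.1.2 m).1, (splitAt a.1.2 m).2.1⟩, (key a).1⟩,
     ⟨⟨(htrans (splitAt a.1.2 m).1 v).choose a.1.1,
       ((splitAt a.1.2 m).2.2.map (htrans (splitAt a.1.2 m).1 v).choose.toHom).copy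
         (hφ _) rfl⟩, (key a).2⟩) with hF
  set g : ({p : Σ u : V, G.Walk v u // p.2.IsPath ∧ p.2.length = m} ×
      {p : Σ u : V, G.Walk v u // p.2.IsPath ∧ p.2.length = n}) →
      Σ u : V, G.Walk v u := fun b =>
    ⟨(htrans b.1.1.1 v).choose.symm b.2.1.1,
      b.1.1.2.append
        (((b.2.1.2.copy (hφ b.1.1.1).symm rfl).map
            (htrans b.1.1.1 v).choose.symm.toHom).copy (by simp) rfl)⟩ with hg
  have hgF : ∀ a, g (F a) = a.1 := by
    rintro ⟨⟨u, p⟩, hp, hl⟩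
    simp only [hF, hg]
    have hsym : ∀ x, (htrans (splitAt p m).1 v).choose.symm
        ((htrans (splitAt p m).1 v).choose x) = x :=
      fun x => (htrans (splitAt p m).1 v).choose.toEquiv.symm_apply_apply x
    simp only [SimpleGraph.Walk.map_copy, SimpleGraph.Walk.copy_copy]
    refine sigma_append _ _ (hsym u) p ?_
    rw [SimpleGraph.Walk.copy_copy,
      unmap_walk (htrans (splitAt p m).1 v).choose.toHom
        (htrans (splitAt p m).1 v).choose.symm.toHom hsym]
    exact splitAt_append p m
  exact Nat.card_le_card_of_injective F
    (fun a a' h => Subtype.ext ((hgF a).symm.trans ((congrArg g h).trans (hgF a'))))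

end ConnAux

/-- Let `G` be a connected, locally finite, simple graph whose automorphism group acts
transitively on the vertex set. Then for every vertex `v` the limit
`κ(G) = lim_{n→∞} σ_n(v)^{1/n}` exists, and its value does not depend on the choice
of `v`. -/
theorem connective_constant_vertex_transitive {V : Type*} (G : SimpleGraph V)
    (hconn : G.Connected) (hlf : G.LocallyFinite)
    (htrans : ∀ u v : V, ∃ φ : G ≃g G, φ u = v) :
    ∃ κ : ℝ, ∀ v : V,
      Tendsto (fun n : ℕ => (sawCountG G v n : ℝ) ^ ((1 : ℝ) / n)) atTop (nhds κ) := by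
  classical
  obtain ⟨v0⟩ := hconn.nonempty
  have hconst : ∀ (v : V) (n : ℕ), sawCountG G v n = sawCountG G v0 n :=
    fun v n => ConnAux.sawCount_const hlf htrans v v0 n
  have hsub : ∀ m n, sawCountG G v0 (m + n) ≤ sawCountG G v0 m * sawCountG G v0 n :=
    fun m n => ConnAux.sawCount_subadd hlf htrans v0 m n
  have hzero : sawCountG G v0 0 = 1 := ConnAux.sawCount_zero v0
  by_cases hpos : ∀ n, sawCountG G v0 n ≠ 0
  · set u : ℕ → ℝ := fun n => Real.log (sawCountG G v0 n) with hu
    have hge : ∀ n, (1 : ℝ) ≤ (sawCountG G v0 n : ℝ) := by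
      intro n
      exact_mod_cast Nat.one_le_iff_ne_zero.mpr (hpos n)
    have husub : Subadditive u := by
      intro m n
      rw [hu]
      dsimp only
      rw [← Real.log_mul (Nat.cast_ne_zero.mpr (hpos m)) (Nat.cast_ne_zero.mpr (hpos n)), ← Nat.cast_mul]
      exact Real.log_le_log (by linarith [hge (m + n)]) (by exact_mod_cast hsub m n)
    have hbdd : BddBelow (Set.range fun n : ℕ => u n / n) := by
      refine ⟨0, ?_⟩
      rintro x ⟨n, rfl⟩
      have h1 : 0 ≤ u n := Real.log_nonneg (hge n)
      positivity
    refine ⟨Real.exp husub.lim, fun v => ?_⟩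
    have h2 := (Real.continuous_exp.tendsto _).comp (husub.tendsto_lim hbdd)
    refine h2.congr fun n => ?_
    have hposn : (0 : ℝ) < (sawCountG G v0 n : ℝ) := by linarith [hge n]
    rw [Function.comp_apply, hconst v n, Real.rpow_def_of_pos hposn]
    rw [div_eq_mul_one_div, mul_comm]
  · push_neg at hpos
    obtain ⟨N, hN⟩ := hpos
    refine ⟨0, fun v => ?_⟩
    have hzero' : ∀ n, N ≤ n → sawCountG G v0 n = 0 := by
      intro n hn
      have h1 := hsub N (n - N)
      rw [Nat.add_sub_cancel' hn] at h1
      simpa [hN] using h1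
    have hev : (fun n : ℕ => (sawCountG G v n : ℝ) ^ ((1 : ℝ) / n)) =ᶠ[atTop]
        (fun _ : ℕ => (0 : ℝ)) := by
      filter_upwards [eventually_ge_atTop (max N 1)] with n hn
      have hn1 : 1 ≤ n := le_trans (le_max_right _ _) hn
      rw [hconst v n, hzero' n (le_trans (le_max_left _ _) hn)]
      rw [Nat.cast_zero, Real.zero_rpow]
      positivity
    exact Tendsto.congr' hev.symm tendsto_const_nhds
end

section
/- In the randomly oriented square lattice, the percolation probability satisfies the symmetry θ(p) = θ(1−p) for all p ∈ [0,1]. -/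
open MeasureTheory

/-- Edges of `ℤ²`: the pair `(v, true)` denotes the horizontal edge joining `v` to
`v + (1, 0)`, and `(v, false)` denotes the vertical edge joining `v` to `v + (0, 1)`. -/
abbrev LatticeEdge : Type := (ℤ × ℤ) × Bool

/-- An orientation configuration `ω : LatticeEdge → Bool`: for a horizontal edge
`(v, true)`, the value `true` means it is oriented rightward (from `v` to `v+(1,0)`)
and `false` leftward; for a vertical edge `(v, false)`, `true` means upward (from `v`
to `v+(0,1)`) and `false` downward. `orientedAdj ω a b` says the edge between `a` and
`b` is oriented from `a` to `b`. -/
def orientedAdj (ω : LatticeEdge → Bool) (a b : ℤ × ℤ) : Prop :=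
  (ω (a, true) = true ∧ b = (a.1 + 1, a.2)) ∨
  (ω (b, true) = false ∧ a = (b.1 + 1, b.2)) ∨
  (ω (a, false) = true ∧ b = (a.1, a.2 + 1)) ∨
  (ω (b, false) = false ∧ a = (b.1, b.2 + 1))

/-- The origin is the endpoint of an infinite oriented path directed away from it:
there exist distinct vertices `0 = v 0, v 1, v 2, …` such that for each `i` the edge
between `v i` and `v (i+1)` is oriented from `v i` to `v (i+1)`. -/
def origPercolates (ω : LatticeEdge → Bool) : Prop :=
  ∃ v : ℕ → ℤ × ℤ, v 0 = (0, 0) ∧ Function.Injective v ∧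
    ∀ i : ℕ, orientedAdj ω (v i) (v (i + 1))

/-- `P` is the law of the randomly oriented square lattice with parameter `p`: a
probability measure on orientation configurations under which the orientations of
distinct edges are independent, each horizontal edge being oriented rightward with
probability `p` (leftward otherwise) and each vertical edge upward with probability
`p` (downward otherwise). -/
def IsRandomOrientation (p : ℝ) (P : Measure (LatticeEdge → Bool)) : Prop :=
  IsProbabilityMeasure P ∧
    ∀ (s : Finset LatticeEdge) (f : LatticeEdge → Bool),
      P {ω | ∀ e ∈ s, ω e = f e} =
        ENNReal.ofReal (∏ e ∈ s, if f e then p else 1 - p)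

/-!
The point reflection `v ↦ -v` of `ℤ²` maps the oriented lattice to one in which every edge points
against the coordinate direction it pointed along before. It therefore carries the law with
parameter `p` to the law with parameter `1 - p` (such a law is unique, being determined by its
finite-dimensional marginals), while it fixes the origin and maps infinite oriented paths from the
origin to infinite oriented paths from the origin.
-/

theorem MeasureTheory.Measure.ext_of_cylinder_eq {ι α : Type*} [MeasurableSpace α] [Countable α]
    [MeasurableSingletonClass α] [Nonempty α] {μ ν : Measure (ι → α)} [IsFiniteMeasure μ]
    (h : ∀ (s : Finset ι) (f : ι → α),
      μ {ω | ∀ i ∈ s, ω i = f i} = ν {ω | ∀ i ∈ s, ω i = f i}) :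
    μ = ν := by
  classical
  refine IsProjectiveLimit.unique (P := fun s => μ.map s.restrict) (fun _ => rfl)
    fun s => (Measure.ext_of_singleton fun (a : s → α) => ?_).symm
  let f : ι → α := fun i => if hi : i ∈ s then a ⟨i, hi⟩ else Classical.arbitrary α
  have hcyl : (s.restrict : (ι → α) → s → α) ⁻¹' {a} = {ω : ι → α | ∀ i ∈ s, ω i = f i} := by
    ext ω
    simp only [Set.mem_preimage, Set.mem_singleton_iff, Set.mem_ofPred_eq, funext_iff,
      Subtype.forall, Finset.restrict]
    exact forall₂_congr fun i hi => by simp only [f, dif_pos hi]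
  rw [Measure.map_apply (Finset.measurable_restrict s) (measurableSet_singleton _),
    Measure.map_apply (Finset.measurable_restrict s) (measurableSet_singleton _), hcyl, h]

namespace LatticeEdge

def step (b : Bool) : ℤ × ℤ := if b then (1, 0) else (0, 1)

def reflect (e : LatticeEdge) : LatticeEdge := (-e.1 - step e.2, e.2)

theorem reflect_involutive : Function.Involutive reflect := by
  rintro ⟨v, b⟩
  simp [reflect]

end LatticeEdge

open LatticeEdge

theorem orientedAdj_iff {ω : LatticeEdge → Bool} {a b : ℤ × ℤ} :
    orientedAdj ω a b ↔ ∃ d, (ω (a, d) = true ∧ b = a + step d) ∨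
      (ω (b, d) = false ∧ a = b + step d) := by
  simp only [orientedAdj, Prod.ext_iff, step, Prod.fst_add, Prod.snd_add, Bool.exists_bool,
    Bool.false_eq_true, ↓reduceIte, add_zero]
  tauto

/-- The image of the oriented lattice under the point reflection `v ↦ -v`: reflecting a rightward
(upward) edge gives a leftward (downward) one, hence the negation. -/
def pointReflect (ω : LatticeEdge → Bool) : LatticeEdge → Bool := fun e => !ω e.reflect

theorem pointReflect_involutive : Function.Involutive pointReflect := by
  intro ω
  funext e
  simp [pointReflect, reflect_involutive e]

theorem orientedAdj_pointReflect {ω : LatticeEdge → Bool} {a b : ℤ × ℤ} :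
    orientedAdj (pointReflect ω) a b ↔ orientedAdj ω (-a) (-b) := by
  simp only [orientedAdj_iff, pointReflect, reflect, Bool.not_eq_true', Bool.not_eq_false']
  refine exists_congr fun d => ?_
  -- a forward step of `pointReflect ω` out of `a` is a backward step of `ω` into `-a`
  grind

theorem origPercolates_pointReflect_of_origPercolates {ω : LatticeEdge → Bool}
    (h : origPercolates ω) : origPercolates (pointReflect ω) := by
  obtain ⟨v, hv0, hv, hadj⟩ := h
  refine ⟨fun i => -v i, by simp [hv0], neg_injective.comp hv, fun i => ?_⟩
  simpa [orientedAdj_pointReflect] using hadj i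

theorem origPercolates_pointReflect {ω : LatticeEdge → Bool} :
    origPercolates (pointReflect ω) ↔ origPercolates ω :=
  ⟨fun h => pointReflect_involutive ω ▸ origPercolates_pointReflect_of_origPercolates h,
    origPercolates_pointReflect_of_origPercolates⟩

theorem measurable_pointReflect : Measurable pointReflect := by
  unfold pointReflect
  fun_prop

theorem map_pointReflect_apply (μ : Measure (LatticeEdge → Bool)) (S : Set (LatticeEdge → Bool)) :
    μ.map pointReflect S = μ (pointReflect ⁻¹' S) :=
  (MeasurableEquiv.ofInvolutive _ pointReflect_involutive measurable_pointReflect).map_apply S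

theorem preimage_pointReflect_cylinder (s : Finset LatticeEdge) (f : LatticeEdge → Bool) :
    pointReflect ⁻¹' {ω | ∀ e ∈ s, ω e = f e} =
      {ω | ∀ e ∈ s.image reflect, ω e = !f e.reflect} := by
  ext ω
  simp only [Set.mem_preimage, Set.mem_ofPred_eq, Finset.forall_mem_image, pointReflect,
    reflect_involutive _, Bool.not_eq_eq_eq_not]

theorem IsRandomOrientation.unique {p : ℝ} {P P' : Measure (LatticeEdge → Bool)}
    (hP : IsRandomOrientation p P) (hP' : IsRandomOrientation p P') : P = P' :=
  have := hP.1
  Measure.ext_of_cylinder_eq fun s f => (hP.2 s f).trans (hP'.2 s f).symm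

theorem IsRandomOrientation.map_pointReflect {p : ℝ} {P : Measure (LatticeEdge → Bool)}
    (hP : IsRandomOrientation p P) : IsRandomOrientation (1 - p) (P.map pointReflect) := by
  have := hP.1
  refine ⟨Measure.isProbabilityMeasure_map measurable_pointReflect.aemeasurable, fun s f => ?_⟩
  rw [map_pointReflect_apply, preimage_pointReflect_cylinder, hP.2,
    Finset.prod_image fun _ _ _ _ h => reflect_involutive.injective h]
  congr 1
  refine Finset.prod_congr rfl fun e _ => ?_
  rw [reflect_involutive e]
  cases f e <;> simp

theorem randomly_oriented_theta_symmetric_general (p : ℝ)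
    (P Q : Measure (LatticeEdge → Bool))
    (hP : IsRandomOrientation p P) (hQ : IsRandomOrientation (1 - p) Q) :
    P {ω | origPercolates ω} = Q {ω | origPercolates ω} := by
  rw [← hP.map_pointReflect.unique hQ, map_pointReflect_apply]
  exact congrArg P (Set.ext fun _ => origPercolates_pointReflect).symm

/-- In the randomly oriented square lattice, the percolation probability satisfies the
symmetry `θ(p) = θ(1 − p)` for all `p ∈ [0, 1]`. -/
theorem randomly_oriented_theta_symmetric (p : ℝ) (hp0 : 0 ≤ p) (hp1 : p ≤ 1)
    (P Q : Measure (LatticeEdge → Bool))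
    (hP : IsRandomOrientation p P) (hQ : IsRandomOrientation (1 - p) Q) :
    P {ω | origPercolates ω} = Q {ω | origPercolates ω} :=
  randomly_oriented_theta_symmetric_general p P Q hP hQ
end
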